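/- arXiv:2402.02743 — 2 statements merged into one kernel-verified Lean document; each statement's English description precedes it below -/
import Mathlib

section
/- The exponential generating function identity Σ_{n≥0} F_n(x,z) tⁿ/n! = (1-x)e^{zt}/(e^{xt} - x e^{t}) holds as an identity of formal power series in t over the field ℚ(x,z); equivalently, (e^{xt} - x e^{t})·Σ_{n≥0} F_n(x,z) tⁿ/n! = (1-x)e^{zt}, where F_n(x,z) = Σ_{σ ∈ S_n} x^{exc(σ)} z^{fix(σ)}. -/
/-! For a finite linear order `α` put `F_α(x, v) = Σ_{σ ∈ S_α} x^{exc σ} v^{fix σ}`; it depends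
only on `|α|`. Expanding `(u + v)^{fix σ}` over the subsets of fixed points of `σ` and deleting
the chosen fixed points gives
`Σ_{σ ∈ S_n} x^{exc σ} (u + v)^{fix σ} = Σ_k C(n,k) u^k F_{n-k}(x, v)`,
so the right-hand side is symmetric in `u` and `v`. Composing `σ ∈ S_{m+1}` with the inverse of
the cyclic shift `i ↦ i + 1` turns its `exc + 1` into the weak excedances `exc + fix` of the
composite, hence `F_m(x, x) = x F_m(x, 1)` for `m ≥ 1`. Therefore
`Σ_k C(n,k) (x^k - x) F_{n-k}(x, z) = Σ_k C(n,k) z^k (F_{n-k}(x, x) - x F_{n-k}(x, 1))`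
collapses to its `k = n` term `(1 - x) z^n`, which is the coefficient of `tⁿ/n!` in the identity. -/

open Finset

/-- The value `σ(i)` of a permutation of `{1,…,n}` at a one-based position `i`,
with the convention `σ(0) = 0` (and value `0` outside `[1,n]`). -/
def pv {n : ℕ} (σ : Equiv.Perm (Fin n)) (i : ℕ) : ℕ :=
  if h : 1 ≤ i ∧ i ≤ n then ((σ ⟨i - 1, by omega⟩ : Fin n) : ℕ) + 1 else 0

def exc {n : ℕ} (σ : Equiv.Perm (Fin n)) : ℕ :=
  ((Finset.Icc 1 n).filter (fun i => i < pv σ i)).card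

def fixpt {n : ℕ} (σ : Equiv.Perm (Fin n)) : ℕ :=
  ((Finset.Icc 1 n).filter (fun i => pv σ i = i)).card

def lsuc {n : ℕ} (σ : Equiv.Perm (Fin n)) : ℕ :=
  ((Finset.Icc 1 n).filter (fun i => pv σ (i - 1) + 1 = pv σ i)).card

open MvPolynomial PowerSeries

/-- `F_n(x,z) = Σ_{σ ∈ S_n} x^{exc σ} z^{fix σ}` with `x = MvPolynomial.X 0`, `z = MvPolynomial.X 1`, over `ℚ`. -/
noncomputable def Fxz (n : ℕ) : MvPolynomial (Fin 2) ℚ :=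
  ∑ σ : Equiv.Perm (Fin n), MvPolynomial.X 0 ^ exc σ * MvPolynomial.X 1 ^ fixpt σ

/-- The exponential series `e^{pt} = Σ_n pⁿ tⁿ/n!` as a formal power series in `t`. -/
noncomputable def expS (p : MvPolynomial (Fin 2) ℚ) :
    PowerSeries (MvPolynomial (Fin 2) ℚ) :=
  PowerSeries.mk fun n => (n.factorial : ℚ)⁻¹ • p ^ n

namespace Fintype

theorem card_filter_subtype_add_card_filter_subtype {α : Type*} [Fintype α] (p P : α → Prop)
    [DecidablePred p] [DecidablePred P] :
    #{b : Subtype p | P b} + #{b : {a // ¬p a} | P b} = #{a | P a} := by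
  simp only [card_filter]
  exact sum_subtype_add_sum_subtype p fun a => if P a then 1 else 0

end Fintype

namespace Equiv.Perm

variable {α β : Type*} [Fintype α] [LinearOrder α] [Fintype β] [LinearOrder β]

def excCount (σ : Perm α) : ℕ := #{i | i < σ i}

def fixCount (σ : Perm α) : ℕ := #{i | σ i = i}

theorem excCount_add_fixCount (σ : Perm α) : σ.excCount + σ.fixCount = #{i | i ≤ σ i} := by
  rw [excCount, fixCount, ← card_union_of_disjoint, ← filter_or]
  · simp_rw [le_iff_lt_or_eq, eq_comm]
  · exact disjoint_filter.2 fun i _ h => h.ne'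

theorem excCount_permCongr (e : α ≃o β) (σ : Perm α) :
    (e.toEquiv.permCongr σ).excCount = σ.excCount :=
  (card_equiv e.toEquiv fun i => by simp only [mem_filter, mem_univ, true_and]; simp).symm

theorem fixCount_permCongr (e : α ≃o β) (σ : Perm α) :
    (e.toEquiv.permCongr σ).fixCount = σ.fixCount :=
  (card_equiv e.toEquiv fun i => by simp only [mem_filter, mem_univ, true_and]; simp).symm

section ofSubtype

variable {p : α → Prop} [DecidablePred p] (τ : Perm (Subtype p))

theorem excCount_ofSubtype : (ofSubtype τ).excCount = τ.excCount := by
  have hp (b : Subtype p) : ofSubtype τ b = τ b := ofSubtype_apply_of_mem τ b.2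
  have hnp (b : {a // ¬p a}) : ofSubtype τ b = b := ofSubtype_apply_of_not_mem τ b.2
  rw [excCount, ← Fintype.card_filter_subtype_add_card_filter_subtype p]
  simp [excCount, hp, hnp]

theorem fixCount_ofSubtype : (ofSubtype τ).fixCount = τ.fixCount + #{a | ¬p a} := by
  have hp (b : Subtype p) : ofSubtype τ b = τ b := ofSubtype_apply_of_mem τ b.2
  have hnp (b : {a // ¬p a}) : ofSubtype τ b = b := ofSubtype_apply_of_not_mem τ b.2
  rw [fixCount, ← Fintype.card_filter_subtype_add_card_filter_subtype p]
  simp [fixCount, hp, hnp, Subtype.ext_iff, Fintype.card_subtype]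

end ofSubtype

end Equiv.Perm

section excFixSum

open Equiv Perm

variable {R : Type*} [CommSemiring R]

def excFixSum (α : Type*) [Fintype α] [LinearOrder α] (x v : R) : R :=
  ∑ σ : Perm α, x ^ σ.excCount * v ^ σ.fixCount

variable {α β : Type*} [Fintype α] [LinearOrder α] [Fintype β] [LinearOrder β] (x v : R)

theorem excFixSum_congr (e : α ≃o β) : excFixSum α x v = excFixSum β x v :=
  Fintype.sum_equiv e.toEquiv.permCongr _ _ fun σ => by
    rw [excCount_permCongr, fixCount_permCongr]

theorem excFixSum_eq_excFixSum_fin : excFixSum α x v = excFixSum (Fin (Fintype.card α)) x v :=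
  excFixSum_congr x v (Fintype.orderIsoFinOfCardEq α rfl).symm

theorem excFixSum_of_isEmpty [IsEmpty α] : excFixSum α x v = 1 := by
  simp [excFixSum, excCount, fixCount]

theorem sum_perm_fixing_eq_excFixSum (t : Finset α) :
    ∑ σ : Perm α with ∀ a ∈ t, σ a = a, x ^ σ.excCount * v ^ (σ.fixCount - #t) =
      excFixSum {a // a ∉ t} x v := by
  refine (Finset.sum_subtype _ (fun σ => ?_) _).trans
    (Fintype.sum_equiv (Perm.subtypeEquivSubtypePerm (· ∉ t)) _ _ fun τ => ?_).symm
  · simp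
  · simp [excCount_ofSubtype, fixCount_ofSubtype]

theorem sum_pow_excCount_mul_add_pow_fixCount (u : R) :
    ∑ σ : Perm α, x ^ σ.excCount * (u + v) ^ σ.fixCount =
      ∑ t : Finset α, u ^ #t * excFixSum {a // a ∉ t} x v := by
  calc ∑ σ : Perm α, x ^ σ.excCount * (u + v) ^ σ.fixCount
      = ∑ σ : Perm α, ∑ t ∈ ({a | σ a = a} : Finset α).powerset,
          u ^ #t * (x ^ σ.excCount * v ^ (σ.fixCount - #t)) := by
        refine Fintype.sum_congr _ _ fun σ => ?_
        rw [fixCount, ← sum_pow_mul_eq_add_pow, mul_sum]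
        exact sum_congr rfl fun t _ => by ring
    _ = ∑ t : Finset α, ∑ σ : Perm α with ∀ a ∈ t, σ a = a,
          u ^ #t * (x ^ σ.excCount * v ^ (σ.fixCount - #t)) :=
        sum_comm' fun σ t => by simp [subset_iff]
    _ = _ := by simp_rw [← mul_sum, sum_perm_fixing_eq_excFixSum]

end excFixSum

section binomial

open Equiv Perm

variable {R : Type*} [CommSemiring R]

theorem sum_choose_mul_excFixSum (x u v : R) (n : ℕ) :
    ∑ k ∈ range (n + 1), n.choose k * u ^ k * excFixSum (Fin (n - k)) x v =
      ∑ σ : Perm (Fin n), x ^ σ.excCount * (u + v) ^ σ.fixCount := by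
  rw [sum_pow_excCount_mul_add_pow_fixCount]
  have hcard (t : Finset (Fin n)) : Fintype.card {a // a ∉ t} = n - #t := by
    simp [Fintype.card_subtype_compl]
  have hF (t : Finset (Fin n)) : excFixSum {a // a ∉ t} x v = excFixSum (Fin (n - #t)) x v := by
    rw [excFixSum_eq_excFixSum_fin, hcard]
  simp_rw [hF]
  rw [← powerset_univ, sum_powerset_apply_card (fun k => u ^ k * excFixSum (Fin (n - k)) x v),
    card_univ, Fintype.card_fin]
  simp [nsmul_eq_mul, mul_assoc]

theorem sum_choose_mul_excFixSum_comm (x u v : R) (n : ℕ) :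
    ∑ k ∈ range (n + 1), n.choose k * u ^ k * excFixSum (Fin (n - k)) x v =
      ∑ k ∈ range (n + 1), n.choose k * v ^ k * excFixSum (Fin (n - k)) x u := by
  rw [sum_choose_mul_excFixSum, sum_choose_mul_excFixSum, add_comm]

end binomial

section rotation

open Equiv Perm

variable {n : ℕ}

theorem le_finRotate_symm_iff {i a : Fin (n + 1)} :
    i ≤ (finRotate (n + 1)).symm a ↔ a = 0 ∨ i < a := by
  rcases Fin.eq_zero_or_eq_succ a with rfl | ⟨j, rfl⟩
  · simp [(finRotate (n + 1)).symm_apply_eq.2 finRotate_last.symm, Fin.le_last]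
  · simp only [Fin.succ_ne_zero, false_or, Fin.le_def, Fin.lt_def, Fin.val_succ,
      coe_finRotate_symm_of_ne_zero (Fin.succ_ne_zero j)]
    omega

theorem card_le_finRotate_symm_mul (σ : Perm (Fin (n + 1))) :
    #{i | i ≤ ((finRotate (n + 1)).symm * σ) i} = σ.excCount + 1 := by
  simp_rw [Perm.mul_apply, le_finRotate_symm_iff, filter_or]
  rw [card_union_of_disjoint]
  · simp [excCount, ← σ.eq_symm_apply, filter_eq', add_comm]
  · exact disjoint_filter.2 fun i _ h => h ▸ (Fin.not_lt_zero i)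

theorem excFixSum_fin_succ_self {R : Type*} [CommSemiring R] (x : R) :
    excFixSum (Fin (n + 1)) x x = x * excFixSum (Fin (n + 1)) x 1 := by
  rw [excFixSum, excFixSum, mul_sum]
  refine (Fintype.sum_equiv (Equiv.mulLeft (finRotate (n + 1)).symm) _ _ fun σ => ?_).symm
  dsimp only [Equiv.coe_mulLeft]
  rw [← pow_add, excCount_add_fixCount, card_le_finRotate_symm_mul]
  ring

end rotation

theorem sum_choose_mul_sub_mul_excFixSum {R : Type*} [CommRing R] (x z : R) (n : ℕ) :
    ∑ k ∈ range (n + 1), n.choose k * (x ^ k - x) * excFixSum (Fin (n - k)) x z =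
      (1 - x) * z ^ n := by
  have h1 := sum_choose_mul_excFixSum_comm x 1 z n
  have hx := sum_choose_mul_excFixSum_comm x x z n
  simp only [one_pow, mul_one] at h1
  calc ∑ k ∈ range (n + 1), n.choose k * (x ^ k - x) * excFixSum (Fin (n - k)) x z
      = ∑ k ∈ range (n + 1), n.choose k * x ^ k * excFixSum (Fin (n - k)) x z
          - x * ∑ k ∈ range (n + 1), n.choose k * excFixSum (Fin (n - k)) x z := by
        rw [mul_sum, ← sum_sub_distrib]
        exact sum_congr rfl fun k _ => by ring
    _ = ∑ k ∈ range (n + 1), n.choose k * z ^ k *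
          (excFixSum (Fin (n - k)) x x - x * excFixSum (Fin (n - k)) x 1) := by
        rw [hx, h1, mul_sum, ← sum_sub_distrib]
        exact sum_congr rfl fun k _ => by ring
    _ = (1 - x) * z ^ n := by
        rw [sum_eq_single_of_mem n (self_mem_range_succ n)]
        · rw [Nat.choose_self, Nat.sub_self, excFixSum_of_isEmpty, excFixSum_of_isEmpty]
          ring
        · intro k hk hkn
          obtain ⟨m, hm⟩ : ∃ m, n - k = m + 1 := ⟨n - k - 1, by grind⟩
          rw [hm, excFixSum_fin_succ_self, sub_self, mul_zero]

theorem card_filter_Icc_one_eq (n : ℕ) (P : ℕ → Prop) [DecidablePred P] :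
    #{i ∈ Icc 1 n | P i} = #{i : Fin n | P (i + 1)} := by
  refine (card_bij (fun i _ => i.val + 1) (fun i hi => ?_) (fun i _ j _ h => ?_)
    fun j hj => ?_).symm
  · simp_all
  · simpa [Fin.ext_iff] using h
  · simp only [mem_filter, mem_Icc] at hj
    exact ⟨⟨j - 1, by omega⟩, by simpa [show j - 1 + 1 = j by omega] using hj.2, by simp; omega⟩

theorem pv_val_add_one {n : ℕ} (σ : Equiv.Perm (Fin n)) (i : Fin n) :
    pv σ (i + 1) = σ i + 1 := by
  simp [pv]

theorem exc_eq_excCount {n : ℕ} (σ : Equiv.Perm (Fin n)) : exc σ = σ.excCount := by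
  rw [exc, card_filter_Icc_one_eq]
  simp only [pv_val_add_one, add_lt_add_iff_right, Fin.val_fin_lt]
  rfl

theorem fixpt_eq_fixCount {n : ℕ} (σ : Equiv.Perm (Fin n)) : fixpt σ = σ.fixCount := by
  rw [fixpt, card_filter_Icc_one_eq]
  simp only [pv_val_add_one, Nat.add_right_cancel_iff, Fin.val_inj]
  rfl

theorem Fxz_eq_excFixSum (n : ℕ) :
    Fxz n = excFixSum (Fin n) (MvPolynomial.X 0) (MvPolynomial.X 1) := by
  simp [Fxz, excFixSum, exc_eq_excCount, fixpt_eq_fixCount]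

section egf

variable {A : Type*} [CommSemiring A] [Algebra ℚ A]

def egf (a : ℕ → A) : PowerSeries A :=
  PowerSeries.mk fun n => (n.factorial : ℚ)⁻¹ • a n

theorem egf_mul (a b : ℕ → A) :
    egf a * egf b = egf fun n => ∑ k ∈ range (n + 1), n.choose k * (a k * b (n - k)) := by
  ext n
  rw [PowerSeries.coeff_mul, Nat.sum_antidiagonal_eq_sum_range_succ_mk]
  simp only [egf, PowerSeries.coeff_mk, smul_sum]
  refine sum_congr rfl fun k hk => ?_
  have hkn : k ≤ n := Nat.lt_succ_iff.1 (mem_range.1 hk)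
  rw [smul_mul_smul_comm, ← nsmul_eq_mul, ← Nat.cast_smul_eq_nsmul ℚ, smul_smul,
    Nat.cast_choose ℚ hkn]
  congr 1
  field_simp

end egf

/-- Foata–Schützenberger:
`(e^{xt} - x e^t) · Σ_n F_n(x,z) tⁿ/n! = (1-x) e^{zt}`. -/
theorem foata_schutzenberger :
    (expS (MvPolynomial.X 0) - PowerSeries.C (MvPolynomial.X 0) * expS 1) *
        PowerSeries.mk (fun n => (n.factorial : ℚ)⁻¹ • Fxz n) =
      PowerSeries.C (1 - MvPolynomial.X 0) * expS (MvPolynomial.X 1) := by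
  have hlhs : expS (MvPolynomial.X 0) - PowerSeries.C (MvPolynomial.X 0) * expS 1 =
      egf fun k => MvPolynomial.X 0 ^ k - MvPolynomial.X 0 := by
    refine PowerSeries.ext fun n => ?_
    simp [expS, egf, smul_sub]
  have hrhs : PowerSeries.C (1 - MvPolynomial.X 0) * expS (MvPolynomial.X 1) =
      egf fun n => (1 - MvPolynomial.X 0) * MvPolynomial.X 1 ^ n := by
    refine PowerSeries.ext fun n => ?_
    simp only [expS, egf, PowerSeries.coeff_C_mul, PowerSeries.coeff_mk, mul_smul_comm]
  have hF : PowerSeries.mk (fun n => (n.factorial : ℚ)⁻¹ • Fxz n) =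
      egf fun n => excFixSum (Fin n) (MvPolynomial.X 0) (MvPolynomial.X 1) := by
    simp [egf, Fxz_eq_excFixSum]
  rw [hlhs, hF, hrhs, egf_mul]
  refine congrArg egf (funext fun n => ?_)
  simp_rw [← mul_assoc]
  exact sum_choose_mul_sub_mul_excFixSum _ _ n
end

section
/- For every n ≥ 1, there exists a bijection Φ from the set of permutations of {1,…,n} to itself such that for every σ, L̄(σ) = F(Φ(σ)) and Jump-value-set(σ) = Exc-value-set(Φ(σ)), where (with σ(0)=0) L̄(σ) = {σ(i) : σ(i-1)+1 = σ(i)}, Jump-value-set(σ) = {σ(i) : σ(i) ≥ σ(i-1)+2}, F(τ) = {i : τ(i) = i}, and Exc-value-set(τ) = {τ(i) : τ(i) > i}. -/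
open Finset

/-- The left-succession value set `L̄(σ)` (with `σ(0)=0`). -/
def Lbar {n : ℕ} (σ : Equiv.Perm (Fin n)) : Finset ℕ :=
  ((Finset.Icc 1 n).filter (fun i => pv σ (i - 1) + 1 = pv σ i)).image (pv σ)

/-- The jump value set `{σ(i) : 1 ≤ i ≤ n, σ(i) ≥ σ(i-1)+2}`. -/
def Jbar {n : ℕ} (σ : Equiv.Perm (Fin n)) : Finset ℕ :=
  ((Finset.Icc 1 n).filter (fun i => pv σ (i - 1) + 2 ≤ pv σ i)).image (pv σ)

/-- The fixed-point set `F(τ)`. -/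
def Fset {n : ℕ} (τ : Equiv.Perm (Fin n)) : Finset ℕ :=
  (Finset.Icc 1 n).filter (fun i => pv τ i = i)

/-- The excedance value set `{τ(i) : τ(i) > i}`. -/
def ExcBar {n : ℕ} (τ : Equiv.Perm (Fin n)) : Finset ℕ :=
  ((Finset.Icc 1 n).filter (fun i => i < pv τ i)).image (pv τ)


namespace DEGaux

variable {n : ℕ}

def q (σ : Equiv.Perm (Fin n)) : ℕ → ℕ := pv σ.symm

def S (σ : Equiv.Perm (Fin n)) : Finset ℕ :=
  (Finset.Icc 1 n).filter fun v => ∀ j ∈ Finset.Icc (q σ v) n, pv σ j ≤ v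

def upAux (T : Finset ℕ) (last : ℕ) (m : ℕ) : ℕ :=
  if m ∈ T then
    (if h : (T.filter fun z => m < z).Nonempty then (T.filter fun z => m < z).min' h else last)
  else m

def up (σ : Equiv.Perm (Fin n)) : ℕ → ℕ := upAux (S σ) (pv σ n)

def c (σ : Equiv.Perm (Fin n)) (v : ℕ) : ℕ :=
  if q σ v = n then 0 else pv σ (q σ v + 1)

def H (σ : Equiv.Perm (Fin n)) (v : ℕ) : ℕ := c σ (up σ v)

def nsm (σ : Equiv.Perm (Fin n)) (z : ℕ) : ℕ :=
  (((S σ).filter fun m => q σ z ≤ q σ m).max).getD 0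

/- pv basics -/

lemma pv_def (σ : Equiv.Perm (Fin n)) {i : ℕ} (h1 : 1 ≤ i) (h2 : i ≤ n) :
    pv σ i = (σ ⟨i - 1, by omega⟩ : ℕ) + 1 := dif_pos ⟨h1, h2⟩

lemma pv_zero (σ : Equiv.Perm (Fin n)) : pv σ 0 = 0 := dif_neg (by omega)

lemma pv_le (σ : Equiv.Perm (Fin n)) (i : ℕ) : pv σ i ≤ n := by
  unfold pv
  split
  · exact Nat.succ_le_of_lt (Fin.isLt _)
  · omega

lemma pv_pos (σ : Equiv.Perm (Fin n)) {i : ℕ} (h1 : 1 ≤ i) (h2 : i ≤ n) : 1 ≤ pv σ i := by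
  rw [pv_def σ h1 h2]; omega

lemma pv_symm_pv (σ : Equiv.Perm (Fin n)) {i : ℕ} (h1 : 1 ≤ i) (h2 : i ≤ n) :
    pv σ.symm (pv σ i) = i := by
  rw [pv_def σ h1 h2]
  rw [pv_def σ.symm (by omega) (Nat.succ_le_of_lt (Fin.isLt _))]
  have h3 : (⟨(σ ⟨i - 1, by omega⟩ : ℕ) + 1 - 1, by omega⟩ : Fin n) = σ ⟨i - 1, by omega⟩ := by
    ext; simp
  rw [h3, Equiv.symm_apply_apply]
  simp; omega

lemma pv_pv_symm (σ : Equiv.Perm (Fin n)) {v : ℕ} (h1 : 1 ≤ v) (h2 : v ≤ n) :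
    pv σ (pv σ.symm v) = v := by
  have := pv_symm_pv σ.symm h1 h2
  rwa [Equiv.symm_symm] at this

lemma q_le (σ : Equiv.Perm (Fin n)) (v : ℕ) : q σ v ≤ n := pv_le _ _

lemma q_pos (σ : Equiv.Perm (Fin n)) {v : ℕ} (h1 : 1 ≤ v) (h2 : v ≤ n) : 1 ≤ q σ v :=
  pv_pos _ h1 h2

lemma q_zero (σ : Equiv.Perm (Fin n)) : q σ 0 = 0 := pv_zero _

lemma w_q (σ : Equiv.Perm (Fin n)) {v : ℕ} (h1 : 1 ≤ v) (h2 : v ≤ n) :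
    pv σ (q σ v) = v := pv_pv_symm σ h1 h2

lemma q_w (σ : Equiv.Perm (Fin n)) {i : ℕ} (h1 : 1 ≤ i) (h2 : i ≤ n) :
    q σ (pv σ i) = i := pv_symm_pv σ h1 h2

lemma pv_inj (σ : Equiv.Perm (Fin n)) {i j : ℕ} (hi1 : 1 ≤ i) (hi2 : i ≤ n)
    (hj1 : 1 ≤ j) (hj2 : j ≤ n) (h : pv σ i = pv σ j) : i = j := by
  have := q_w σ hi1 hi2
  rw [h, q_w σ hj1 hj2] at this
  omega


/- S basics -/

lemma mem_S_iff (σ : Equiv.Perm (Fin n)) {v : ℕ} :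
    v ∈ S σ ↔ (1 ≤ v ∧ v ≤ n ∧ ∀ j, q σ v ≤ j → j ≤ n → pv σ j ≤ v) := by
  simp [S, Finset.mem_filter, Finset.mem_Icc, and_assoc]

lemma mem_S_bounds (σ : Equiv.Perm (Fin n)) {v : ℕ} (h : v ∈ S σ) : 1 ≤ v ∧ v ≤ n :=
  ⟨((mem_S_iff σ).mp h).1, ((mem_S_iff σ).mp h).2.1⟩

lemma mem_S_prop (σ : Equiv.Perm (Fin n)) {v j : ℕ} (h : v ∈ S σ) (h1 : q σ v ≤ j)
    (h2 : j ≤ n) : pv σ j ≤ v := ((mem_S_iff σ).mp h).2.2 j h1 h2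

lemma n_mem_S (σ : Equiv.Perm (Fin n)) (hn : 1 ≤ n) : n ∈ S σ :=
  (mem_S_iff σ).mpr ⟨hn, le_refl n, fun j _ _ => pv_le σ j⟩

lemma last_mem_S (σ : Equiv.Perm (Fin n)) (hn : 1 ≤ n) : pv σ n ∈ S σ := by
  refine (mem_S_iff σ).mpr ⟨pv_pos σ hn (le_refl n), pv_le σ n, fun j h1 h2 => ?_⟩
  have hq : q σ (pv σ n) = n := q_w σ hn (le_refl n)
  rw [hq] at h1
  have : j = n := by omega
  rw [this]

lemma last_le_mem_S (σ : Equiv.Perm (Fin n)) {v : ℕ} (h : v ∈ S σ) : pv σ n ≤ v :=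
  mem_S_prop σ h (q_le σ v) (le_refl n)

/- existence of a suffix max dominating position p -/
lemma exists_suffix_max (σ : Equiv.Perm (Fin n)) {p : ℕ} (h1 : 1 ≤ p) (h2 : p ≤ n) :
    ∃ Z ∈ S σ, p ≤ q σ Z ∧ pv σ p ≤ Z := by
  have hne : (Finset.Icc p n).Nonempty := ⟨p, by simp [Finset.mem_Icc]; omega⟩
  obtain ⟨j0, hj0, hmax⟩ := Finset.exists_max_image (Finset.Icc p n) (pv σ) hne
  rw [Finset.mem_Icc] at hj0
  have hZ1 : 1 ≤ pv σ j0 := le_trans (pv_pos σ h1 h2) (hmax p (by simp [Finset.mem_Icc]; omega))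
  have hZ2 : pv σ j0 ≤ n := pv_le σ j0
  have hqZ : q σ (pv σ j0) = j0 := q_w σ (by omega) hj0.2
  refine ⟨pv σ j0, (mem_S_iff σ).mpr ⟨hZ1, hZ2, fun j hja hjb => ?_⟩, ?_, ?_⟩
  · rw [hqZ] at hja
    exact hmax j (by simp [Finset.mem_Icc]; omega)
  · rw [hqZ]; exact hj0.1
  · exact hmax p (by simp [Finset.mem_Icc]; omega)


/- up lemmas -/

lemma up_of_notMem (σ : Equiv.Perm (Fin n)) {m : ℕ} (h : m ∉ S σ) : up σ m = m := by
  simp [up, upAux, h]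

lemma notMem_S_of_gt (σ : Equiv.Perm (Fin n)) {z : ℕ} (h : n < z) : z ∉ S σ := by
  intro hz; have := (mem_S_bounds σ hz).2; omega

lemma up_n (σ : Equiv.Perm (Fin n)) (hn : 1 ≤ n) : up σ n = pv σ n := by
  have hempty : ¬ ((S σ).filter fun z => n < z).Nonempty := by
    rintro ⟨z, hz⟩
    rw [Finset.mem_filter] at hz
    exact notMem_S_of_gt σ hz.2 hz.1
  simp [up, upAux, n_mem_S σ hn, hempty]

lemma eq_n_of_no_gt (σ : Equiv.Perm (Fin n)) (hn : 1 ≤ n) {m : ℕ} (hm : m ∈ S σ)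
    (h : ¬ ((S σ).filter fun z => m < z).Nonempty) : m = n := by
  by_contra hne
  have hmn : m < n := by have := (mem_S_bounds σ hm).2; omega
  exact h ⟨n, Finset.mem_filter.mpr ⟨n_mem_S σ hn, hmn⟩⟩

lemma up_of_no_gt (σ : Equiv.Perm (Fin n)) {m : ℕ} (hm : m ∈ S σ)
    (h : ¬ ((S σ).filter fun z => m < z).Nonempty) : up σ m = pv σ n := by
  simp [up, upAux, hm, h]

lemma up_spec (σ : Equiv.Perm (Fin n)) {m : ℕ} (hm : m ∈ S σ)
    (h : ((S σ).filter fun z => m < z).Nonempty) :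
    up σ m ∈ S σ ∧ m < up σ m ∧ ∀ z ∈ S σ, m < z → up σ m ≤ z := by
  have hup : up σ m = ((S σ).filter fun z => m < z).min' h := by simp [up, upAux, hm, h]
  have hmem := Finset.min'_mem _ h
  rw [Finset.mem_filter] at hmem
  rw [hup]
  exact ⟨hmem.1, hmem.2, fun z hz hmz => Finset.min'_le _ z (Finset.mem_filter.mpr ⟨hz, hmz⟩)⟩

lemma up_mem_S (σ : Equiv.Perm (Fin n)) (hn : 1 ≤ n) {m : ℕ} (hm : m ∈ S σ) :
    up σ m ∈ S σ := by
  by_cases h : ((S σ).filter fun z => m < z).Nonempty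
  · exact (up_spec σ hm h).1
  · rw [up_of_no_gt σ hm h]; exact last_mem_S σ hn

lemma up_le (σ : Equiv.Perm (Fin n)) (hn : 1 ≤ n) {m : ℕ} (h : m ≤ n) : up σ m ≤ n := by
  by_cases hm : m ∈ S σ
  · exact (mem_S_bounds σ (up_mem_S σ hn hm)).2
  · rw [up_of_notMem σ hm]; exact h

lemma up_inj (σ : Equiv.Perm (Fin n)) (hn : 1 ≤ n) {a b : ℕ} (h : up σ a = up σ b) :
    a = b := by
  by_cases ha : a ∈ S σ <;> by_cases hb : b ∈ S σ
  · by_cases hna : ((S σ).filter fun z => a < z).Nonempty <;>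
      by_cases hnb : ((S σ).filter fun z => b < z).Nonempty
    · rcases lt_trichotomy a b with hab | hab | hab
      · exfalso
        have h1 := (up_spec σ ha hna).2.2 b hb hab
        have h2 := (up_spec σ hb hnb).2.1
        rw [h] at h1; omega
      · exact hab
      · exfalso
        have h1 := (up_spec σ hb hnb).2.2 a ha hab
        have h2 := (up_spec σ ha hna).2.1
        rw [← h] at h1; omega
    · exfalso
      have hbn : b = n := eq_n_of_no_gt σ hn hb hnb
      have h1 : up σ b = pv σ n := up_of_no_gt σ hb hnb
      have h2 := (up_spec σ ha hna).2.1
      have h3 := last_le_mem_S σ ha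
      rw [h1] at h; omega
    · exfalso
      have han : a = n := eq_n_of_no_gt σ hn ha hna
      have h1 : up σ a = pv σ n := up_of_no_gt σ ha hna
      have h2 := (up_spec σ hb hnb).2.1
      have h3 := last_le_mem_S σ hb
      rw [h1] at h; omega
    · rw [eq_n_of_no_gt σ hn ha hna, eq_n_of_no_gt σ hn hb hnb]
  · exfalso
    have := up_mem_S σ hn ha
    rw [h, up_of_notMem σ hb] at this
    exact hb this
  · exfalso
    have := up_mem_S σ hn hb
    rw [← h, up_of_notMem σ ha] at this
    exact ha this
  · rwa [up_of_notMem σ ha, up_of_notMem σ hb] at h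

/- c lemmas -/

lemma c_w (σ : Equiv.Perm (Fin n)) {i : ℕ} (h : i < n) : c σ (pv σ i) = pv σ (i + 1) := by
  by_cases hi : 1 ≤ i
  · have hq : q σ (pv σ i) = i := q_w σ hi (by omega)
    rw [c, hq, if_neg (by omega)]
  · have hi0 : i = 0 := by omega
    subst hi0
    rw [c, pv_zero, q_zero, if_neg (by omega)]

lemma c_last (σ : Equiv.Perm (Fin n)) (hn : 1 ≤ n) : c σ (pv σ n) = 0 := by
  rw [c, q_w σ hn (le_refl n), if_pos rfl]

lemma c_le (σ : Equiv.Perm (Fin n)) (v : ℕ) : c σ v ≤ n := by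
  rw [c]; split
  · omega
  · exact pv_le σ _

lemma eq_last_of_q_eq_n (σ : Equiv.Perm (Fin n)) (hn : 1 ≤ n) {v : ℕ} (hv : v ≤ n)
    (h : q σ v = n) : v = pv σ n := by
  by_cases h1 : 1 ≤ v
  · have hw := w_q σ h1 hv
    rw [h] at hw; omega
  · exfalso; have : v = 0 := by omega
    rw [this, q_zero] at h; omega

lemma c_inj (σ : Equiv.Perm (Fin n)) (hn : 1 ≤ n) {a b : ℕ} (ha : a ≤ n) (hb : b ≤ n)
    (h : c σ a = c σ b) : a = b := by
  rw [c, c] at h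
  by_cases hqa : q σ a = n <;> by_cases hqb : q σ b = n
  · rw [eq_last_of_q_eq_n σ hn ha hqa, eq_last_of_q_eq_n σ hn hb hqb]
  · rw [if_pos hqa, if_neg hqb] at h
    have := pv_pos σ (i := q σ b + 1) (by omega) (by have := q_le σ b; omega)
    omega
  · rw [if_neg hqa, if_pos hqb] at h
    have := pv_pos σ (i := q σ a + 1) (by omega) (by have := q_le σ a; omega)
    omega
  · rw [if_neg hqa, if_neg hqb] at h
    have hqq : q σ a + 1 = q σ b + 1 :=
      pv_inj σ (by omega) (by have := q_le σ a; omega) (by omega) (by have := q_le σ b; omega) h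
    -- now a = b via w_q, handling zero cases
    by_cases h1 : 1 ≤ a <;> by_cases h2 : 1 ≤ b
    · rw [← w_q σ h1 ha, ← w_q σ h2 hb]; rw [show q σ a = q σ b by omega]
    · exfalso
      have hb0 : b = 0 := by omega
      rw [hb0, q_zero] at hqq
      have : q σ a = 0 := by omega
      have := q_pos σ h1 ha; omega
    · exfalso
      have ha0 : a = 0 := by omega
      rw [ha0, q_zero] at hqq
      have := q_pos σ h2 hb; omega
    · omega

/- H lemmas -/

lemma H_le (σ : Equiv.Perm (Fin n)) (v : ℕ) : H σ v ≤ n := c_le σ _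

lemma H_n (σ : Equiv.Perm (Fin n)) (hn : 1 ≤ n) : H σ n = 0 := by
  rw [H, up_n σ hn, c_last σ hn]

lemma H_pos (σ : Equiv.Perm (Fin n)) (hn : 1 ≤ n) {v : ℕ} (hv : v < n) : 1 ≤ H σ v := by
  by_contra h
  have h0 : c σ (up σ v) = 0 := by rw [H] at h; omega
  have hupv : up σ v ≤ n := up_le σ hn (by omega)
  have hq : q σ (up σ v) = n := by
    rw [c] at h0; by_contra hq
    rw [if_neg hq] at h0
    have := pv_pos σ (i := q σ (up σ v) + 1) (by omega) (by have := q_le σ (up σ v); omega)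
    omega
  have hlast : up σ v = pv σ n := eq_last_of_q_eq_n σ hn hupv hq
  by_cases hv' : v ∈ S σ
  · by_cases hne : ((S σ).filter fun z => v < z).Nonempty
    · have h1 := (up_spec σ hv' hne).2.1
      have h2 := last_le_mem_S σ hv'
      omega
    · have := eq_n_of_no_gt σ hn hv' hne; omega
  · rw [up_of_notMem σ hv'] at hlast
    rw [hlast] at hv'
    exact hv' (last_mem_S σ hn)

lemma H_inj (σ : Equiv.Perm (Fin n)) (hn : 1 ≤ n) {a b : ℕ} (ha : a ≤ n) (hb : b ≤ n)
    (h : H σ a = H σ b) : a = b :=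
  up_inj σ hn (c_inj σ hn (up_le σ hn ha) (up_le σ hn hb) h)

/- L1, L2 -/

lemma c_le_self_of_mem_S (σ : Equiv.Perm (Fin n)) {m : ℕ} (hm : m ∈ S σ) : c σ m ≤ m := by
  rw [c]; split
  · omega
  · exact mem_S_prop σ hm (by omega) (by have := q_le σ m; omega)

lemma H_le_self_of_mem_S (σ : Equiv.Perm (Fin n)) (hn : 1 ≤ n) {m : ℕ} (hm : m ∈ S σ) :
    H σ m ≤ m := by
  by_cases hne : ((S σ).filter fun z => m < z).Nonempty
  · obtain ⟨hu_mem, hu_lt, hu_min⟩ := up_spec σ hm hne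
    set u := up σ m with hu
    rw [H, ← hu]
    rw [c]
    split
    · omega
    · rename_i hqu
      set z := pv σ (q σ u + 1) with hz
      by_contra hcon
      push_neg at hcon
      have hqu_le := q_le σ u
      have hzn : q σ u + 1 ≤ n := by omega
      obtain ⟨Z, hZS, hZq, hZge⟩ := exists_suffix_max σ (p := q σ u + 1) (by omega) hzn
      have hZw : pv σ (q σ Z) = Z := w_q σ (mem_S_bounds σ hZS).1 (mem_S_bounds σ hZS).2
      have hZu : Z ≤ u := by
        have := mem_S_prop σ hu_mem (j := q σ Z) (by omega) (q_le σ Z)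
        omega
      have hmZ : m < Z := by omega
      have huZ : u ≤ Z := hu_min Z hZS hmZ
      have : u = Z := by omega
      rw [this] at hZq
      have hqZ : q σ Z ≤ n := q_le σ Z
      omega
  · have := eq_n_of_no_gt σ (by have := (mem_S_bounds σ hm).2; have := (mem_S_bounds σ hm).1; omega) hm hne
    rw [this, H_n σ (by have := (mem_S_bounds σ hm).1; have := (mem_S_bounds σ hm).2; omega)]
    omega


/- nsm lemmas -/

lemma nsm_filter_nonempty (σ : Equiv.Perm (Fin n)) (hn : 1 ≤ n) {z : ℕ} (hz : z ≤ n) :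
    ((S σ).filter fun m => q σ z ≤ q σ m).Nonempty := by
  refine ⟨pv σ n, Finset.mem_filter.mpr ⟨last_mem_S σ hn, ?_⟩⟩
  rw [q_w σ hn (le_refl n)]
  exact q_le σ z

lemma nsm_spec (σ : Equiv.Perm (Fin n)) (hn : 1 ≤ n) {z : ℕ} (hz : z ≤ n) :
    nsm σ z ∈ S σ ∧ q σ z ≤ q σ (nsm σ z) ∧ ∀ m ∈ S σ, q σ z ≤ q σ m → m ≤ nsm σ z := by
  have hne := nsm_filter_nonempty σ hn hz
  obtain ⟨b, hb⟩ := Finset.max_of_nonempty hne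
  have hbmem := Finset.mem_of_max hb
  rw [Finset.mem_filter] at hbmem
  have hnsm : nsm σ z = b := by rw [nsm, hb]; rfl
  rw [hnsm]
  refine ⟨hbmem.1, hbmem.2, fun m hm hqm => ?_⟩
  have hmm : m ∈ (S σ).filter fun x => q σ z ≤ q σ x := Finset.mem_filter.mpr ⟨hm, hqm⟩
  have h5 := Finset.le_max hmm
  rw [hb] at h5
  exact_mod_cast h5

lemma le_nsm (σ : Equiv.Perm (Fin n)) (hn : 1 ≤ n) {z : ℕ} (hz : z ≤ n) : z ≤ nsm σ z := by
  by_cases h1 : 1 ≤ z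
  · obtain ⟨Z, hZS, hZq, hZge⟩ := exists_suffix_max σ (q_pos σ h1 hz) (q_le σ z)
    have hw : pv σ (q σ z) = z := w_q σ h1 hz
    have := (nsm_spec σ hn hz).2.2 Z hZS hZq
    omega
  · have : z = 0 := by omega
    rw [this]; omega

lemma nsm_of_mem_S (σ : Equiv.Perm (Fin n)) (hn : 1 ≤ n) {m : ℕ} (hm : m ∈ S σ) :
    nsm σ m = m := by
  have hb := mem_S_bounds σ hm
  have h1 := (nsm_spec σ hn hb.2).2.2 m hm (le_refl _)
  have h2 : nsm σ m ≤ m := by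
    obtain ⟨hS, hq, _⟩ := nsm_spec σ hn hb.2
    have hbb := mem_S_bounds σ hS
    have := mem_S_prop σ hm hq (q_le σ _)
    rw [w_q σ hbb.1 hbb.2] at this
    exact this
  omega

lemma nsm_mem_S (σ : Equiv.Perm (Fin n)) (hn : 1 ≤ n) {z : ℕ} (hz : z ≤ n) :
    nsm σ z ∈ S σ := (nsm_spec σ hn hz).1


/- the key invariance: nsm (H z) = nsm z -/

lemma q_up_lt_q (σ : Equiv.Perm (Fin n)) {z : ℕ} (hz : z ∈ S σ)
    (hne : ((S σ).filter fun x => z < x).Nonempty) : q σ (up σ z) < q σ z := by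
  obtain ⟨huS, hlt, _⟩ := up_spec σ hz hne
  have hub := mem_S_bounds σ huS
  by_contra hcon
  push_neg at hcon
  have h2 := mem_S_prop σ hz (j := q σ (up σ z)) hcon (q_le σ _)
  rw [w_q σ hub.1 hub.2] at h2
  omega

lemma nsm_H (σ : Equiv.Perm (Fin n)) (hn : 1 ≤ n) {z : ℕ} (hz : z ≤ n) :
    nsm σ (H σ z) = nsm σ z := by
  by_cases hzS : z ∈ S σ
  · rw [nsm_of_mem_S σ hn hzS]
    by_cases hne : ((S σ).filter fun x => z < x).Nonempty
    · obtain ⟨huS, hzu, humin⟩ := up_spec σ hzS hne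
      set u := up σ z with hu
      have hub := mem_S_bounds σ huS
      have hqu_lt : q σ u < q σ z := q_up_lt_q σ hzS hne
      have hqz_le : q σ z ≤ n := q_le σ z
      have hqu_ne : q σ u ≠ n := by omega
      have hHz : H σ z = pv σ (q σ u + 1) := by
        rw [H, ← hu, c, if_neg hqu_ne]
      have hq' : q σ (H σ z) = q σ u + 1 := by
        rw [hHz]
        exact q_w σ (by have := q_pos σ hub.1 hub.2; omega) (by omega)
      have hHle : H σ z ≤ n := H_le σ z
      obtain ⟨hnS, hnq, hnmax⟩ := nsm_spec σ hn hHle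
      have h1 : z ≤ nsm σ (H σ z) := by
        refine hnmax z hzS ?_
        rw [hq']; omega
      have h2 : nsm σ (H σ z) ≤ z := by
        set m := nsm σ (H σ z) with hm
        have hmb := mem_S_bounds σ hnS
        rw [hq'] at hnq
        have hmu : m ≤ u := by
          have := mem_S_prop σ huS (j := q σ m) (by omega) (q_le σ m)
          rw [w_q σ hmb.1 hmb.2] at this
          exact this
        have hmne : m ≠ u := by
          intro he
          rw [he] at hnq
          omega
        by_contra hcon
        push_neg at hcon
        have := humin m hnS hcon
        omega
      omega
    · have hzn : z = n := eq_n_of_no_gt σ hn hzS hne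
      rw [hzn, H_n σ hn]
      obtain ⟨hnS, _, hnmax⟩ := nsm_spec σ hn (Nat.zero_le n)
      have h1 : n ≤ nsm σ 0 := by
        refine hnmax n (n_mem_S σ hn) ?_
        rw [q_zero]
        exact Nat.zero_le _
      have h2 := (mem_S_bounds σ hnS).2
      omega
  · have hHz : H σ z = c σ z := by rw [H, up_of_notMem σ hzS]
    have hqz_ne : q σ z ≠ n := by
      intro he
      have := eq_last_of_q_eq_n σ hn hz he
      rw [this] at hzS
      exact hzS (last_mem_S σ hn)
    have hczz : H σ z = pv σ (q σ z + 1) := by rw [hHz, c, if_neg hqz_ne]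
    have hqzn := q_le σ z
    have hq' : q σ (H σ z) = q σ z + 1 := by
      rw [hczz]
      exact q_w σ (by omega) (by omega)
    have hset : ((S σ).filter fun m => q σ (H σ z) ≤ q σ m)
        = (S σ).filter fun m => q σ z ≤ q σ m := by
      apply Finset.ext
      intro m
      simp only [Finset.mem_filter, hq']
      constructor
      · rintro ⟨h1, h2⟩; exact ⟨h1, by omega⟩
      · rintro ⟨h1, h2⟩
        refine ⟨h1, ?_⟩
        rcases Nat.lt_or_ge (q σ z) (q σ m) with h | h
        · omega
        · exfalso
          have hqq : q σ m = q σ z := by omega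
          have hmb := mem_S_bounds σ h1
          by_cases hz1 : 1 ≤ z
          · have e1 := w_q σ hmb.1 hmb.2
            have e2 := w_q σ hz1 hz
            rw [hqq] at e1
            have : m = z := by omega
            rw [this] at h1
            exact hzS h1
          · have hz0 : z = 0 := by omega
            rw [hz0, q_zero] at hqq
            have := q_pos σ hmb.1 hmb.2
            omega
    rw [nsm, nsm, hset]

/- iterates -/

lemma H_iter_le (σ : Equiv.Perm (Fin n)) {z : ℕ} (hz : z ≤ n) (k : ℕ) : (H σ)^[k] z ≤ n := by
  induction k generalizing z with
  | zero => simpa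
  | succ k ih =>
    rw [Function.iterate_succ_apply]
    exact ih (H_le σ z)

lemma nsm_H_iter (σ : Equiv.Perm (Fin n)) (hn : 1 ≤ n) {z : ℕ} (hz : z ≤ n) (k : ℕ) :
    nsm σ ((H σ)^[k] z) = nsm σ z := by
  induction k generalizing z with
  | zero => simp
  | succ k ih =>
    rw [Function.iterate_succ_apply, ih (H_le σ z), nsm_H σ hn hz]

lemma reach_aux (σ : Equiv.Perm (Fin n)) (hn : 1 ≤ n) :
    ∀ fuel z, z ≤ n → q σ (nsm σ z) - q σ z < fuel → ∃ k, (H σ)^[k] z = nsm σ z := by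
  intro fuel
  induction fuel with
  | zero => intro z hz h; omega
  | succ fuel ih =>
    intro z hz hfuel
    by_cases hzS : z ∈ S σ
    · exact ⟨0, by simp [nsm_of_mem_S σ hn hzS]⟩
    · have hqz_ne : q σ z ≠ n := by
        intro he
        have := eq_last_of_q_eq_n σ hn hz he
        rw [this] at hzS
        exact hzS (last_mem_S σ hn)
      have hqzn := q_le σ z
      have hczz : H σ z = pv σ (q σ z + 1) := by
        rw [H, up_of_notMem σ hzS, c, if_neg hqz_ne]
      have hq' : q σ (H σ z) = q σ z + 1 := by
        rw [hczz]; exact q_w σ (by omega) (by omega)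
      have hnsmH := nsm_H σ hn hz
      have hstrict : q σ z < q σ (nsm σ z) := by
        obtain ⟨hnS, hq2, _⟩ := nsm_spec σ hn hz
        rcases Nat.lt_or_ge (q σ z) (q σ (nsm σ z)) with h | h
        · exact h
        · exfalso
          have hqq : q σ (nsm σ z) = q σ z := by omega
          have hmb := mem_S_bounds σ hnS
          by_cases hz1 : 1 ≤ z
          · have e1 := w_q σ hmb.1 hmb.2
            have e2 := w_q σ hz1 hz
            rw [hqq] at e1
            have : nsm σ z = z := by omega
            rw [this] at hnS
            exact hzS hnS
          · have hz0 : z = 0 := by omega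
            have hq0 : q σ z = 0 := by rw [hz0, q_zero]
            have := q_pos σ hmb.1 hmb.2
            omega
      obtain ⟨k, hk⟩ := ih (H σ z) (H_le σ z) (by rw [hnsmH, hq']; omega)
      exact ⟨k + 1, by rw [Function.iterate_succ_apply, hk, hnsmH]⟩

lemma reach (σ : Equiv.Perm (Fin n)) (hn : 1 ≤ n) {z : ℕ} (hz : z ≤ n) :
    ∃ k, (H σ)^[k] z = nsm σ z :=
  reach_aux σ hn (q σ (nsm σ z) - q σ z + 1) z hz (by omega)

/- KEY -/

lemma mem_S_iff_cycle_max (σ : Equiv.Perm (Fin n)) (hn : 1 ≤ n) {v : ℕ} :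
    v ∈ S σ ↔ (1 ≤ v ∧ v ≤ n ∧ ∀ k, (H σ)^[k] v ≤ v) := by
  constructor
  · intro hv
    have hb := mem_S_bounds σ hv
    refine ⟨hb.1, hb.2, fun k => ?_⟩
    have h1 : (H σ)^[k] v ≤ n := H_iter_le σ hb.2 k
    have h2 : nsm σ ((H σ)^[k] v) = nsm σ v := nsm_H_iter σ hn hb.2 k
    have h3 := le_nsm σ hn h1
    rw [h2, nsm_of_mem_S σ hn hv] at h3
    exact h3
  · rintro ⟨h1, h2, h3⟩
    obtain ⟨k, hk⟩ := reach σ hn h2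
    have h4 := h3 k
    rw [hk] at h4
    have h5 := le_nsm σ hn h2
    have : nsm σ v = v := by omega
    rw [← this]
    exact nsm_mem_S σ hn h2


/- Theta -/

def t (σ : Equiv.Perm (Fin n)) (x : Fin n) : Fin n :=
  ⟨H σ (x : ℕ) - 1, by
    have hlt : (x : ℕ) < n := x.isLt
    have h1 : 1 ≤ H σ (x : ℕ) := H_pos σ (by omega) hlt
    have h2 : H σ (x : ℕ) ≤ n := H_le σ (x : ℕ)
    omega⟩

lemma t_inj (σ : Equiv.Perm (Fin n)) : Function.Injective (t σ) := by
  intro x y hxy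
  have hx : (x : ℕ) < n := x.isLt
  have hy : (y : ℕ) < n := y.isLt
  have h1 : 1 ≤ H σ (x : ℕ) := H_pos σ (by omega) hx
  have h2 : 1 ≤ H σ (y : ℕ) := H_pos σ (by omega) hy
  have hval : H σ (x : ℕ) - 1 = H σ (y : ℕ) - 1 := congrArg Fin.val hxy
  have : H σ (x : ℕ) = H σ (y : ℕ) := by omega
  have := H_inj σ (by omega) (by omega) (by omega) this
  exact Fin.ext this

noncomputable def Theta (σ : Equiv.Perm (Fin n)) : Equiv.Perm (Fin n) :=
  Equiv.ofBijective (t σ) (Finite.injective_iff_bijective.mp (t_inj σ))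

lemma pv_Theta (σ : Equiv.Perm (Fin n)) {x : ℕ} (h1 : 1 ≤ x) (h2 : x ≤ n) :
    pv (Theta σ) x = H σ (x - 1) := by
  rw [pv_def _ h1 h2]
  have heq : Theta σ ⟨x - 1, by omega⟩ = t σ ⟨x - 1, by omega⟩ := rfl
  rw [heq]
  have hpos : 1 ≤ H σ (x - 1) := H_pos σ (by omega) (by omega)
  show (H σ ((⟨x - 1, by omega⟩ : Fin n) : ℕ) - 1) + 1 = H σ (x - 1)
  simp only []
  omega

lemma pv_fin (σ : Equiv.Perm (Fin n)) (x : Fin n) : pv σ ((x : ℕ) + 1) = (σ x : ℕ) + 1 := by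
  have hx : (x : ℕ) < n := x.isLt
  rw [pv_def σ (by omega) (by omega)]
  congr 2

/- stats: Fset -/

lemma Fset_Theta (σ : Equiv.Perm (Fin n)) (hn : 1 ≤ n) : Fset (Theta σ) = Lbar σ := by
  apply Finset.ext
  intro v
  simp only [Fset, Lbar, Finset.mem_filter, Finset.mem_image, Finset.mem_Icc]
  constructor
  · rintro ⟨⟨hv1, hv2⟩, hfix⟩
    rw [pv_Theta σ hv1 hv2] at hfix
    have hvS : v - 1 ∉ S σ := by
      intro hS
      have := H_le_self_of_mem_S σ hn hS
      omega
    have hHc : H σ (v - 1) = c σ (v - 1) := by rw [H, up_of_notMem σ hvS]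
    have hq_ne : q σ (v - 1) ≠ n := by
      intro he
      rw [hHc, c, if_pos he] at hfix
      omega
    have hqle := q_le σ (v - 1)
    have hpvi : pv σ (q σ (v - 1) + 1) = v := by
      have hc : c σ (v - 1) = pv σ (q σ (v - 1) + 1) := by rw [c, if_neg hq_ne]
      omega
    have hpvim : pv σ (q σ (v - 1) + 1 - 1) = v - 1 := by
      simp only [Nat.add_sub_cancel]
      by_cases hv2' : 2 ≤ v
      · exact w_q σ (by omega) (by omega)
      · have hv1' : v = 1 := by omega
        rw [hv1']
        show pv σ (q σ 0) = 0
        rw [q_zero, pv_zero]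
    refine ⟨q σ (v - 1) + 1, ⟨⟨by omega, by omega⟩, ?_⟩, hpvi⟩
    rw [hpvim, hpvi]
    omega
  · rintro ⟨i, ⟨⟨hi1, hi2⟩, hsucc⟩, hval⟩
    have hv1 : 1 ≤ v := by rw [← hval]; exact pv_pos σ hi1 hi2
    have hv2 : v ≤ n := by rw [← hval]; exact pv_le σ i
    refine ⟨⟨hv1, hv2⟩, ?_⟩
    rw [pv_Theta σ hv1 hv2]
    have hwim : pv σ (i - 1) = v - 1 := by omega
    have hq : q σ (v - 1) = i - 1 := by
      by_cases hv2' : 2 ≤ v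
      · have hi2' : 2 ≤ i := by
          by_contra hcon
          have hi1' : i = 1 := by omega
          rw [hi1'] at hwim
          have hz : pv σ (1 - 1) = 0 := pv_zero σ
          omega
        rw [← hwim]
        exact q_w σ (by have := pv_pos σ (i := i - 1) (by omega) (by omega); omega) (by omega)
      · have hv1' : v = 1 := by omega
        have hi1' : i = 1 := by
          by_contra hcon
          have h2i : 2 ≤ i := by omega
          have := pv_pos σ (i := i - 1) (by omega) (by omega)
          omega
        rw [hv1', hi1']
        exact q_zero σ
    have hnotS : v - 1 ∉ S σ := by
      intro hS
      by_cases hv2' : 2 ≤ v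
      · have := mem_S_prop σ hS (j := i) (by omega) hi2
        omega
      · have := (mem_S_bounds σ hS).1
        omega
    rw [H, up_of_notMem σ hnotS, c, hq, if_neg (by omega)]
    have : i - 1 + 1 = i := by omega
    rw [this, hval]

/- stats: ExcBar -/

lemma ExcBar_Theta (σ : Equiv.Perm (Fin n)) (hn : 1 ≤ n) : ExcBar (Theta σ) = Jbar σ := by
  apply Finset.ext
  intro v
  simp only [ExcBar, Jbar, Finset.mem_filter, Finset.mem_image, Finset.mem_Icc]
  constructor
  · rintro ⟨x, ⟨⟨hx1, hx2⟩, hexc⟩, hval⟩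
    rw [pv_Theta σ hx1 hx2] at hexc hval
    have hnotS : x - 1 ∉ S σ := by
      intro hS
      have := H_le_self_of_mem_S σ hn hS
      omega
    have hHc : H σ (x - 1) = c σ (x - 1) := by rw [H, up_of_notMem σ hnotS]
    have hq_ne : q σ (x - 1) ≠ n := by
      intro he
      have h0 : c σ (x - 1) = 0 := by rw [c, if_pos he]
      omega
    have hqle := q_le σ (x - 1)
    have hpvi : pv σ (q σ (x - 1) + 1) = v := by
      have hc : c σ (x - 1) = pv σ (q σ (x - 1) + 1) := by rw [c, if_neg hq_ne]
      omega
    have hpvim : pv σ (q σ (x - 1) + 1 - 1) = x - 1 := by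
      simp only [Nat.add_sub_cancel]
      by_cases hx2' : 2 ≤ x
      · exact w_q σ (by omega) (by omega)
      · have hx1' : x = 1 := by omega
        rw [hx1']
        show pv σ (q σ 0) = 0
        rw [q_zero, pv_zero]
    refine ⟨q σ (x - 1) + 1, ⟨⟨by omega, by omega⟩, ?_⟩, hpvi⟩
    rw [hpvim, hpvi]
    omega
  · rintro ⟨i, ⟨⟨hi1, hi2⟩, hjump⟩, hval⟩
    have hv2 : v ≤ n := by rw [← hval]; exact pv_le σ i
    have hu2 : pv σ (i - 1) + 2 ≤ v := by omega
    set u := pv σ (i - 1) with hu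
    have hq : q σ u = i - 1 := by
      by_cases hi2' : 2 ≤ i
      · exact q_w σ (by omega) (by omega)
      · have hi1' : i = 1 := by omega
        have hu0 : u = 0 := by rw [hu, hi1']; exact pv_zero σ
        rw [hu0, q_zero, hi1']
    have hnotS : u ∉ S σ := by
      intro hS
      have := mem_S_prop σ hS (j := i) (by omega) hi2
      omega
    refine ⟨u + 1, ⟨⟨by omega, by omega⟩, ?_⟩, ?_⟩
    · rw [pv_Theta σ (by omega) (by omega)]
      simp only [Nat.add_sub_cancel]
      rw [H, up_of_notMem σ hnotS, c, hq, if_neg (by omega)]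
      have : i - 1 + 1 = i := by omega
      rw [this]
      omega
    · rw [pv_Theta σ (by omega) (by omega)]
      simp only [Nat.add_sub_cancel]
      rw [H, up_of_notMem σ hnotS, c, hq, if_neg (by omega)]
      have : i - 1 + 1 = i := by omega
      rw [this, hval]

/- injectivity -/

lemma Theta_inj (hn : 1 ≤ n) : Function.Injective (Theta (n := n)) := by
  intro σ1 σ2 hT
  have Heq : ∀ u, u ≤ n → H σ1 u = H σ2 u := by
    intro u hu
    rcases Nat.eq_or_lt_of_le hu with he | hlt
    · rw [he, H_n σ1 hn, H_n σ2 hn]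
    · have h := congrArg (fun τ => pv τ (u + 1)) hT
      rw [pv_Theta σ1 (by omega) (by omega), pv_Theta σ2 (by omega) (by omega)] at h
      simpa using h
  have iter_eq : ∀ k u, u ≤ n → (H σ1)^[k] u = (H σ2)^[k] u := by
    intro k
    induction k with
    | zero => intro u hu; simp
    | succ k ih =>
      intro u hu
      rw [Function.iterate_succ_apply, Function.iterate_succ_apply, Heq u hu]
      exact ih _ (H_le σ2 u)
  have S_eq : S σ1 = S σ2 := by
    apply Finset.ext
    intro v
    rw [mem_S_iff_cycle_max σ1 hn, mem_S_iff_cycle_max σ2 hn]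
    constructor
    · rintro ⟨h1, h2, h3⟩
      exact ⟨h1, h2, fun k => by rw [← iter_eq k v h2]; exact h3 k⟩
    · rintro ⟨h1, h2, h3⟩
      exact ⟨h1, h2, fun k => by rw [iter_eq k v h2]; exact h3 k⟩
  have last_eq : pv σ1 n = pv σ2 n := by
    have h1 : pv σ2 n ∈ S σ1 := by rw [S_eq]; exact last_mem_S σ2 hn
    have h2 : pv σ1 n ∈ S σ2 := by rw [← S_eq]; exact last_mem_S σ1 hn
    have h3 := last_le_mem_S σ1 h1
    have h4 := last_le_mem_S σ2 h2
    omega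
  have up_eq : ∀ m, up σ1 m = up σ2 m := by
    intro m
    show upAux (S σ1) (pv σ1 n) m = upAux (S σ2) (pv σ2 n) m
    rw [S_eq, last_eq]
  have c_eq : ∀ v, v ≤ n → c σ1 v = c σ2 v := by
    have hsurj := Finset.surj_on_of_inj_on_of_card_le
      (s := Finset.Icc 0 n) (t := Finset.Icc 0 n)
      (fun a _ => up σ1 a)
      (fun a ha => by
        rw [Finset.mem_Icc] at ha ⊢
        exact ⟨Nat.zero_le _, up_le σ1 hn ha.2⟩)
      (fun a1 a2 _ _ he => up_inj σ1 hn he)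
      (le_refl _)
    intro v hv
    obtain ⟨a, ha, hav⟩ := hsurj v (by rw [Finset.mem_Icc]; exact ⟨Nat.zero_le _, hv⟩)
    rw [Finset.mem_Icc] at ha
    have hav' : v = up σ1 a := hav
    have e1 : c σ1 v = H σ1 a := by rw [hav']; rfl
    have e2 : c σ2 v = H σ2 a := by rw [hav', up_eq a]; rfl
    rw [e1, e2, Heq a ha.2]
  have w_eq : ∀ i, i ≤ n → pv σ1 i = pv σ2 i := by
    intro i
    induction i with
    | zero => intro _; rw [pv_zero, pv_zero]
    | succ i ih =>
      intro hi
      rw [← c_w σ1 (i := i) (by omega), ← c_w σ2 (i := i) (by omega)]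
      rw [ih (by omega), c_eq _ (pv_le σ2 i)]
  apply Equiv.ext
  intro x
  have hx : (x : ℕ) < n := x.isLt
  have h := w_eq ((x : ℕ) + 1) (by omega)
  rw [pv_fin σ1 x, pv_fin σ2 x] at h
  have : (σ1 x : ℕ) = (σ2 x : ℕ) := by omega
  exact Fin.ext this


end DEGaux

/-- Set-valued refinement: a bijection `Φ` on `S_n` with `L̄(σ) = F(Φ σ)` and
`Jump-value-set(σ) = Exc-value-set(Φ σ)`. -/
theorem set_valued_bijection (n : ℕ) (hn : 1 ≤ n) :
    ∃ Φ : Equiv.Perm (Fin n) ≃ Equiv.Perm (Fin n),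
      ∀ σ : Equiv.Perm (Fin n), Lbar σ = Fset (Φ σ) ∧ Jbar σ = ExcBar (Φ σ) := by
  refine ⟨Equiv.ofBijective DEGaux.Theta
    (Finite.injective_iff_bijective.mp (DEGaux.Theta_inj hn)), fun σ => ?_⟩
  exact ⟨(DEGaux.Fset_Theta σ hn).symm, (DEGaux.ExcBar_Theta σ hn).symm⟩
end
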